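/- Exponential decay of solutions: let β ∈ (0,1/2), f : T_m → ℝ bounded, and u : T_m × [0,∞) → ℝ the solution of u_t = Δ_β u with u(·,0) = f and u(·,t) → 0 along every branch. Then for every λ ∈ A_β there is a constant C = C(λ) > 0 with |u(x,t)| ≤ C e^{-λt} for all (x,t) ∈ T_m × (0,∞). -/

import Mathlib

/-!
For `t ≥ 1` the solution is compared with the barrier `(M/c) e^{-λ(t-1)} v`, where `M` bounds
`|u|` on `[0, 1]`; for `t ≤ 1` the bound `M` suffices.

The comparison principle on the infinite tree is reduced to an elliptic one by integrating in
time. If `w` is a bounded strict subsolution (`w_t ≤ Δ_β w - σ`) with `w(·, a) ≤ 0`, then a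
smoothing of the positive part shows that `J(x) = ∫ₐᵇ w(x,t)⁺ dt` satisfies
`J(x) + κ p_β^{|x|} J(x)` is at most the weighted average of `J` over the neighbours of `x`. A
greedy walk from a vertex where `J > 0` then gains a fixed multiple of `p_β^{|x|}` at every step;
as `J` is bounded and `p_β < 1`, the walk escapes to infinity along a branch on which `J` stays
away from `0`, against the boundary condition. Hence `J = 0`, i.e. `w ≤ 0`.
-/

open Filter Finset Topology

/-- The weight `p_β`: `1` if `β = 0`, and `β/(1-β)` otherwise. -/
noncomputable def pB (β : ℝ) : ℝ := if β = 0 then 1 else β / (1 - β)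

/-- Vertices of the regular `m`-branching tree are finite sequences over `Fin m`
(the root is `[]`, the successors of `x` are `i :: x`, the predecessor of `a :: t` is `t`,
and the level `|x|` is the list length).  The `β`-Laplacian on the tree. -/
noncomputable def lapB (m : ℕ) (β : ℝ) (u : List (Fin m) → ℝ) : List (Fin m) → ℝ
  | [] => (∑ i : Fin m, u [i]) / m - u []
  | a :: t =>
      (β * u t + (1 - β) * (∑ i : Fin m, u (i :: a :: t)) / m - u (a :: t)) *
        pB β ^ (-((a :: t).length : ℤ))

/-- A branch: an infinite path starting at the root, following successors. -/
def IsBranch (m : ℕ) (b : ℕ → List (Fin m)) : Prop :=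
  b 0 = [] ∧ ∀ n, ∃ i : Fin m, b (n + 1) = i :: b n

/-- Homogeneous Dirichlet boundary condition: `u → 0` along every branch. -/
def ZeroOnBoundary (m : ℕ) (u : List (Fin m) → ℝ) : Prop :=
  ∀ b : ℕ → List (Fin m), IsBranch m b → Tendsto (fun n => u (b n)) atTop (𝓝 0)

/-- `lam` is a principal eigenvalue of `Δ_β`: it is positive and admits a bounded
nonnegative nontrivial eigenfunction vanishing on the boundary. -/
def IsPrincipalEigenvalue (m : ℕ) (β lam : ℝ) : Prop :=
  0 < lam ∧ ∃ u : List (Fin m) → ℝ,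
    (∃ M, ∀ x, |u x| ≤ M) ∧ (∀ x, 0 ≤ u x) ∧ u ≠ 0 ∧
    (∀ x, -lapB m β u x = lam * u x) ∧ ZeroOnBoundary m u

/-- Membership in the set `A_β`. -/
def memA (m : ℕ) (β lam : ℝ) : Prop :=
  0 < lam ∧ ∃ v : List (Fin m) → ℝ, ∃ c C : ℝ, 0 < c ∧
    (∀ x, c < v x ∧ v x < C) ∧ ∀ x, lapB m β v x + lam * v x ≤ 0

/-- `λ₁(β) = sup A_β`. -/
noncomputable def lam1 (m : ℕ) (β : ℝ) : ℝ := sSup {lam | memA m β lam}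

open MeasureTheory

noncomputable def ramp (δ s : ℝ) : ℝ := max 0 (min (s / δ) 1)

lemma continuous_ramp (δ : ℝ) : Continuous (ramp δ) := by
  unfold ramp; fun_prop

lemma ramp_nonneg (δ s : ℝ) : 0 ≤ ramp δ s := le_max_left _ _

lemma ramp_le_one (δ s : ℝ) : ramp δ s ≤ 1 := max_le zero_le_one (min_le_right _ _)

lemma ramp_of_nonpos {δ s : ℝ} (hδ : 0 < δ) (hs : s ≤ 0) : ramp δ s = 0 :=
  max_eq_left <| (min_le_left _ _).trans (div_nonpos_of_nonpos_of_nonneg hs hδ.le)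

lemma posPart_sub_le_ramp_mul {δ : ℝ} (hδ : 0 < δ) (s : ℝ) : max s 0 - δ ≤ ramp δ s * s := by
  rcases le_or_gt s 0 with hs | hs
  · rw [ramp_of_nonpos hδ hs, max_eq_right hs]; linarith
  rcases le_or_gt δ s with h | h
  · rw [ramp, min_eq_right ((le_div_iff₀ hδ).2 (by linarith)), max_eq_right zero_le_one,
      max_eq_left hs.le]
    linarith
  · rw [ramp, min_eq_left ((div_le_one hδ).2 h.le), max_eq_right (by positivity : (0:ℝ) ≤ s / δ),
      max_eq_left hs.le, div_mul_eq_mul_div, le_div_iff₀ hδ]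
    nlinarith

/-- A `C¹` approximation of the positive part `s ↦ max s 0`. -/
noncomputable def smoothPosPart (δ s : ℝ) : ℝ := ∫ τ in (0 : ℝ)..s, ramp δ τ

lemma hasDerivAt_smoothPosPart (δ s : ℝ) : HasDerivAt (smoothPosPart δ) (ramp δ s) s :=
  intervalIntegral.integral_hasDerivAt_right ((continuous_ramp δ).intervalIntegrable _ _)
    (continuous_ramp δ).stronglyMeasurable.stronglyMeasurableAtFilter
    (continuous_ramp δ).continuousAt

lemma continuous_smoothPosPart (δ : ℝ) : Continuous (smoothPosPart δ) :=
  continuous_iff_continuousAt.2 fun s => (hasDerivAt_smoothPosPart δ s).continuousAt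

lemma smoothPosPart_of_nonpos {δ s : ℝ} (hδ : 0 < δ) (hs : s ≤ 0) : smoothPosPart δ s = 0 := by
  rw [smoothPosPart, intervalIntegral.integral_symm, neg_eq_zero]
  exact intervalIntegral.integral_eq_zero_iff_of_le_of_nonneg_ae hs
    (Eventually.of_forall (ramp_nonneg δ)) ((continuous_ramp δ).intervalIntegrable _ _) |>.2
    (by
      filter_upwards [ae_restrict_mem measurableSet_Ioc] with τ hτ
      exact ramp_of_nonpos hδ hτ.2)

lemma smoothPosPart_nonneg {δ : ℝ} (hδ : 0 < δ) (s : ℝ) : 0 ≤ smoothPosPart δ s := by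
  rcases le_or_gt s 0 with hs | hs
  · rw [smoothPosPart_of_nonpos hδ hs]
  · exact intervalIntegral.integral_nonneg hs.le fun τ _ => ramp_nonneg δ τ

lemma intervalIntegral_posPart_le {φ φ' ψ : ℝ → ℝ} {a b r σ M : ℝ} (hab : a ≤ b) (hr : 0 < r)
    (hσ : 0 < σ) (hM : 0 < M)
    (hφ : ∀ t ∈ Set.Icc a b, HasDerivAt φ (φ' t) t) (hψ : ContinuousOn ψ (Set.Icc a b))
    (ha : φ a ≤ 0) (hφM : ∀ t ∈ Set.Icc a b, φ t ≤ M)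
    (hφ' : ∀ t ∈ Set.Icc a b, φ' t ≤ r * (ψ t - φ t) - σ) :
    (r + σ / M) * ∫ t in a..b, max (φ t) 0 ≤ r * ∫ t in a..b, max (ψ t) 0 := by
  have hφc : ContinuousOn φ (Set.Icc a b) := fun t ht => (hφ t ht).continuousAt.continuousWithinAt
  have hφi : IntervalIntegrable (fun t => max (φ t) 0) volume a b :=
    (hφc.sup continuousOn_const).intervalIntegrable_of_Icc hab
  have hψi : IntervalIntegrable (fun t => max (ψ t) 0) volume a b :=
    (hψ.sup continuousOn_const).intervalIntegrable_of_Icc hab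
  set k := r + σ / M
  suffices h : ∀ δ > 0, k * ∫ t in a..b, max (φ t) 0 ≤
      r * (∫ t in a..b, max (ψ t) 0) + δ * (k * (b - a)) by
    refine le_of_forall_pos_le_add fun ε hε => ?_
    have hC : 0 < k * (b - a) + 1 := by positivity
    refine (h _ (div_pos hε hC)).trans ?_
    rw [div_mul_eq_mul_div, add_le_add_iff_left, div_le_iff₀ hC]
    nlinarith
  intro δ hδ
  -- Integrate `d/dt smoothPosPart δ (φ t) = ramp δ (φ t) * φ' t` against the pointwise bound.
  have hpt : ∀ t ∈ Set.Icc a b,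
      ramp δ (φ t) * φ' t ≤ r * max (ψ t) 0 - k * (max (φ t) 0 - δ) := by
    intro t ht
    have hg0 := ramp_nonneg δ (φ t)
    have hg1 := ramp_le_one δ (φ t)
    have h1 := mul_le_mul_of_nonneg_left (hφ' t ht) hg0
    have h2 : ramp δ (φ t) * ψ t ≤ max (ψ t) 0 := by
      rcases le_or_gt (ψ t) 0 with h | h
      · exact (mul_nonpos_of_nonneg_of_nonpos hg0 h).trans (le_max_right _ _)
      · nlinarith [le_max_left (ψ t) 0]
    have h3 := posPart_sub_le_ramp_mul hδ (φ t)
    have h4 : σ / M * (ramp δ (φ t) * φ t) ≤ σ * ramp δ (φ t) := by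
      calc σ / M * (ramp δ (φ t) * φ t) ≤ σ / M * (ramp δ (φ t) * M) := by
            gcongr; exact hφM t ht
        _ = σ * ramp δ (φ t) := by field_simp
    have h5 := mul_le_mul_of_nonneg_left h3 (div_pos hσ hM).le
    have h6 := mul_le_mul_of_nonneg_left h2 hr.le
    have h7 := mul_le_mul_of_nonneg_left h3 hr.le
    simp only [k]
    linarith
  have hFTC : smoothPosPart δ (φ b) - smoothPosPart δ (φ a) ≤
      ∫ t in a..b, (r * max (ψ t) 0 - k * (max (φ t) 0 - δ)) :=
    intervalIntegral.sub_le_integral_of_hasDeriv_right_of_le hab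
    ((continuous_smoothPosPart δ).comp_continuousOn hφc)
    (fun t ht => ((hasDerivAt_smoothPosPart δ (φ t)).comp t
      (hφ t (Set.Ioo_subset_Icc_self ht))).hasDerivWithinAt)
    (((hψ.sup continuousOn_const).const_smul r).sub
      (((hφc.sup continuousOn_const).sub continuousOn_const).const_smul k)
      |>.integrableOn_Icc)
    (fun t ht => hpt t (Set.Ioo_subset_Icc_self ht))
  rw [smoothPosPart_of_nonpos hδ ha, sub_zero,
    intervalIntegral.integral_sub (hψi.const_mul r)
      ((hφi.sub intervalIntegrable_const).const_mul k),
    intervalIntegral.integral_const_mul, intervalIntegral.integral_const_mul,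
    intervalIntegral.integral_sub hφi intervalIntegrable_const, intervalIntegral.integral_const,
    smul_eq_mul] at hFTC
  nlinarith [smoothPosPart_nonneg hδ (φ b)]

lemma pB_pos {β : ℝ} (hβ0 : 0 < β) (hβ1 : β < 1 / 2) : 0 < pB β := by
  rw [pB, if_neg hβ0.ne']
  exact div_pos hβ0 (by linarith)

lemma pB_lt_one {β : ℝ} (hβ0 : 0 < β) (hβ1 : β < 1 / 2) : pB β < 1 := by
  rw [pB, if_neg hβ0.ne', div_lt_one (by linarith)]
  linarith

section TreeOperator

variable {m : ℕ} {β : ℝ}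

def upWeight (β : ℝ) : List (Fin m) → ℝ
  | [] => 0
  | _ :: _ => β

noncomputable def nbrAvg (m : ℕ) (β : ℝ) (w : List (Fin m) → ℝ) (x : List (Fin m)) : ℝ :=
  upWeight β x * w x.tail + (1 - upWeight β x) * (∑ i : Fin m, w (i :: x)) / m

def TreeAdj (x y : List (Fin m)) : Prop := (∃ i, y = i :: x) ∨ ∃ i, x = i :: y

lemma lapB_eq_nbrAvg (w : List (Fin m) → ℝ) (x : List (Fin m)) :
    lapB m β w x = (nbrAvg m β w x - w x) * pB β ^ (-(x.length : ℤ)) := by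
  cases x <;> simp [lapB, nbrAvg, upWeight]

lemma nbrAvg_linear (hm : m ≠ 0) (a b c : ℝ) (w₁ w₂ : List (Fin m) → ℝ) (x : List (Fin m)) :
    nbrAvg m β (fun y => a * w₁ y + b * w₂ y + c) x =
      a * nbrAvg m β w₁ x + b * nbrAvg m β w₂ x + c := by
  simp only [nbrAvg, Finset.sum_add_distrib, ← Finset.mul_sum, Finset.sum_const, Finset.card_univ,
    Fintype.card_fin, nsmul_eq_mul]
  field_simp
  ring

lemma lapB_linear (hm : m ≠ 0) (a b c : ℝ) (w₁ w₂ : List (Fin m) → ℝ) (x : List (Fin m)) :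
    lapB m β (fun y => a * w₁ y + b * w₂ y + c) x = a * lapB m β w₁ x + b * lapB m β w₂ x := by
  simp only [lapB_eq_nbrAvg, nbrAvg_linear hm]
  ring

lemma upWeight_nonneg (hβ0 : 0 ≤ β) (x : List (Fin m)) : 0 ≤ upWeight β x := by
  cases x <;> simp [upWeight, hβ0]

lemma upWeight_le_one (hβ1 : β ≤ 1) (x : List (Fin m)) : upWeight β x ≤ 1 := by
  cases x <;> simp [upWeight, hβ1]

lemma nbrAvg_mono (hβ0 : 0 ≤ β) (hβ1 : β ≤ 1) {w w' : List (Fin m) → ℝ} (h : w ≤ w')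
    (x : List (Fin m)) : nbrAvg m β w x ≤ nbrAvg m β w' x := by
  have := upWeight_nonneg hβ0 x
  have := upWeight_le_one hβ1 x
  unfold nbrAvg
  gcongr <;> exact h _

lemma nbrAvg_nonneg (hβ0 : 0 ≤ β) (hβ1 : β ≤ 1) {w : List (Fin m) → ℝ} (h : 0 ≤ w)
    (x : List (Fin m)) : 0 ≤ nbrAvg m β w x :=
  (nbrAvg_mono hβ0 hβ1 h x).trans_eq' (by simp [nbrAvg])

lemma exists_treeAdj_nbrAvg_le (hm : 0 < m) (hβ0 : 0 ≤ β) (hβ1 : β ≤ 1)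
    (w : List (Fin m) → ℝ) (x : List (Fin m)) : ∃ y, TreeAdj x y ∧ nbrAvg m β w x ≤ w y := by
  have hm' : (0 : ℝ) < m := by exact_mod_cast hm
  obtain ⟨i, -, hi⟩ := Finset.exists_le_of_sum_le (f := fun _ => (∑ j : Fin m, w (j :: x)) / m)
    (g := fun j => w (j :: x)) (Finset.univ_nonempty_iff.2 ⟨⟨0, hm⟩⟩)
    (by simp [mul_div_cancel₀ _ hm'.ne'])
  have hup₀ := upWeight_nonneg hβ0 x
  have hup₁ := upWeight_le_one hβ1 x
  rcases le_total (w x.tail) (w (i :: x)) with h | h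
  · refine ⟨i :: x, .inl ⟨i, rfl⟩, ?_⟩
    rw [nbrAvg, mul_div_assoc]
    nlinarith
  · cases x with
    | nil => exact ⟨[i], .inl ⟨i, rfl⟩, by simpa [nbrAvg, upWeight] using hi⟩
    | cons a t =>
      rw [List.tail_cons] at h
      refine ⟨t, .inr ⟨a, rfl⟩, ?_⟩
      rw [nbrAvg, List.tail_cons, mul_div_assoc]
      nlinarith

section Branch

variable {m : ℕ}

lemma rtake_cons_of_le {ℓ : ℕ} {x : List (Fin m)} (i : Fin m) (h : ℓ ≤ x.length) :
    (i :: x).rtake ℓ = x.rtake ℓ := by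
  rw [List.rtake, List.rtake, List.length_cons, Nat.sub_add_comm h, List.drop_succ_cons]

lemma TreeAdj.rtake_eq {ℓ : ℕ} {x y : List (Fin m)} (h : TreeAdj x y) (hx : ℓ < x.length)
    (hy : ℓ < y.length) : x.rtake ℓ = y.rtake ℓ := by
  rcases h with ⟨i, rfl⟩ | ⟨i, rfl⟩
  · exact (rtake_cons_of_le i hx.le).symm
  · exact rtake_cons_of_le i hy.le

lemma exists_rtake_succ {ℓ : ℕ} {x : List (Fin m)} (h : ℓ < x.length) :
    ∃ i, x.rtake (ℓ + 1) = i :: x.rtake ℓ := by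
  refine ⟨x[x.length - (ℓ + 1)], ?_⟩
  rw [List.rtake, List.rtake, List.drop_eq_getElem_cons (by omega)]
  congr 2
  omega

lemma rtake_eq_of_forall_length_gt {q : ℕ → List (Fin m)} (hadj : ∀ k, TreeAdj (q k) (q (k + 1)))
    {ℓ K : ℕ} (h : ∀ k ≥ K, ℓ < (q k).length) : ∀ k ≥ K, (q k).rtake ℓ = (q K).rtake ℓ := by
  intro k hk
  induction k, hk using Nat.le_induction with
  | base => rfl
  | succ k hk ih => rw [← ih, (hadj k).rtake_eq (h k hk) (h (k + 1) (by omega))]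

/-- The branch consists of the eventual ancestors of the walk at each level; from level `|q 0|`
on, the ancestor at level `ℓ` is the last vertex of that level visited by the walk. -/
lemma exists_branch_of_tendsto_length {q : ℕ → List (Fin m)}
    (hadj : ∀ k, TreeAdj (q k) (q (k + 1))) (hq : Tendsto (fun k => (q k).length) atTop atTop) :
    ∃ b, IsBranch m b ∧ ∀ᶠ ℓ in atTop, b ℓ ∈ Set.range q := by
  have hdeep : ∀ ℓ, ∃ K, ∀ k ≥ K, ℓ < (q k).length := fun ℓ =>
    eventually_atTop.1 (hq.eventually (eventually_gt_atTop ℓ))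
  have hstable : ∀ ℓ, ∃ z, ∀ᶠ k in atTop, ℓ < (q k).length ∧ (q k).rtake ℓ = z := by
    intro ℓ
    obtain ⟨K, hK⟩ := hdeep ℓ
    exact ⟨(q K).rtake ℓ, eventually_atTop.2 ⟨K, fun k hk =>
      ⟨hK k hk, rtake_eq_of_forall_length_gt hadj hK k hk⟩⟩⟩
  choose b hb using hstable
  refine ⟨b, ⟨?_, fun ℓ => ?_⟩, eventually_atTop.2 ⟨(q 0).length, fun ℓ hℓ => ?_⟩⟩
  · obtain ⟨k, -, hk⟩ := (hb 0).exists
    rw [← hk, List.rtake_zero]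
  · obtain ⟨k, ⟨hk, hk'⟩, -, hk''⟩ := ((hb ℓ).and (hb (ℓ + 1))).exists
    obtain ⟨i, hi⟩ := exists_rtake_succ hk
    exact ⟨i, by rw [← hk'', hi, hk']⟩
  -- The walk enters level `ℓ + 1` for the last time from its parent, a vertex of level `ℓ`.
  classical
  let K := Nat.find (hdeep ℓ)
  have hK : ∀ k ≥ K, ℓ < (q k).length := Nat.find_spec (hdeep ℓ)
  obtain ⟨K', hK'⟩ : ∃ K', K = K' + 1 :=
    Nat.exists_eq_succ_of_ne_zero fun h0 => by have := hK 0 h0.le; omega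
  obtain ⟨k, hk, hkℓ⟩ : ∃ k ≥ K', (q k).length ≤ ℓ := by
    simpa using Nat.find_min (hdeep ℓ) (show K' < K by omega)
  obtain rfl : k = K' := by
    by_contra hne
    have := hK k (by omega)
    omega
  have hlt := hK (k + 1) hK'.le
  obtain ⟨i, hi⟩ : ∃ i, q (k + 1) = i :: q k := by
    rcases hadj k with h | ⟨i, hi⟩
    · exact h
    · rw [hi, List.length_cons] at hkℓ; omega
  have hlen : (q k).length = ℓ := by rw [hi, List.length_cons] at hlt; omega
  refine ⟨k, ?_⟩
  obtain ⟨k', ⟨-, hk'⟩, hk'K⟩ := ((hb ℓ).and (eventually_ge_atTop K)).exists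
  rw [← hk', rtake_eq_of_forall_length_gt hadj hK k' hk'K, hK', hi, rtake_cons_of_le i hlen.ge,
    ← hlen, List.rtake, Nat.sub_self, List.drop_zero]

end Branch

lemma exists_seq_of_forall_exists {α : Type*} {S : Set α} {R : α → α → Prop}
    (h : ∀ x ∈ S, ∃ y ∈ S, R x y) {x₀ : α} (hx₀ : x₀ ∈ S) :
    ∃ q : ℕ → α, q 0 = x₀ ∧ ∀ k, q k ∈ S ∧ R (q k) (q (k + 1)) := by
  choose F hFS hFR using h
  let q : ℕ → S := fun k =>
    Nat.rec (motive := fun _ => S) ⟨x₀, hx₀⟩ (fun _ z => ⟨F z z.2, hFS z z.2⟩) k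
  exact ⟨fun k => (q k : α), rfl, fun k => ⟨(q k).2, hFR _ (q k).2⟩⟩

lemma tendsto_atTop_of_tendsto_pow_nhds_zero {ι : Type*} {l : Filter ι} {n : ι → ℕ} {p : ℝ}
    (hp0 : 0 < p) (hp1 : p < 1) (h : Tendsto (fun i => p ^ n i) l (𝓝 0)) :
    Tendsto n l atTop :=
  tendsto_atTop.2 fun L => (h.eventually (gt_mem_nhds (pow_pos hp0 L))).mono fun _ hi =>
    ((pow_lt_pow_iff_right_of_lt_one₀ hp0 hp1).1 hi).le

/-- From a vertex `x₀` with `J x₀ > 0`, moving greedily to a neighbour where `J` is at least the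
average gains `κ p^|x| J x₀` per step, so boundedness forces the walk to infinity, along a branch
on which `J` cannot tend to `0`. -/
theorem nonpos_of_add_mul_le_nbrAvg {m : ℕ} {β : ℝ} (hm : 0 < m) (hβ0 : 0 ≤ β) (hβ1 : β ≤ 1)
    {J : List (Fin m) → ℝ} {κ p B : ℝ} (hκ : 0 < κ) (hp0 : 0 < p) (hp1 : p < 1)
    (hB : ∀ x, J x ≤ B) (hJ : ∀ x, J x + κ * p ^ x.length * J x ≤ nbrAvg m β J x)
    (hbdry : ZeroOnBoundary m J) (x₀ : List (Fin m)) : J x₀ ≤ 0 := by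
  by_contra! h₀
  obtain ⟨q, hq0, hq⟩ := exists_seq_of_forall_exists
    (S := {x | J x₀ ≤ J x}) (R := fun x y => TreeAdj x y ∧ J x + κ * J x₀ * p ^ x.length ≤ J y)
    (fun x hx => by
      obtain ⟨y, hxy, hy⟩ := exists_treeAdj_nbrAvg_le hm hβ0 hβ1 J x
      have hgain : κ * J x₀ * p ^ x.length ≤ κ * p ^ x.length * J x := by
        rw [mul_right_comm]; gcongr; exact hx
      have := hJ x
      have : 0 ≤ κ * J x₀ * p ^ x.length := by positivity
      exact ⟨y, show J x₀ ≤ J y by linarith [show J x₀ ≤ J x from hx], hxy, by linarith⟩)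
    (le_refl (J x₀))
  have hsum : ∀ n, ∑ k ∈ Finset.range n, κ * J x₀ * p ^ (q k).length ≤ B - J x₀ := by
    suffices ∀ n, J x₀ + ∑ k ∈ Finset.range n, κ * J x₀ * p ^ (q k).length ≤ J (q n) from
      fun n => by linarith [this n, hB (q n)]
    intro n
    induction n with
    | zero => simp [hq0]
    | succ n ih => rw [Finset.sum_range_succ]; linarith [(hq n).2.2]
  have hdeep : Tendsto (fun k => (q k).length) atTop atTop := by
    refine tendsto_atTop_of_tendsto_pow_nhds_zero hp0 hp1 ?_
    simpa [hκ.ne', h₀.ne'] using ((summable_of_sum_range_le (fun k => by positivity) hsum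
      ).tendsto_atTop_zero).div_const (κ * J x₀)
  obtain ⟨b, hb, hbq⟩ := exists_branch_of_tendsto_length (fun k => (hq k).2.1) hdeep
  have hge : ∀ᶠ n in atTop, J x₀ ≤ J (b n) := hbq.mono fun _ ⟨k, hk⟩ => hk ▸ (hq k).1
  exact h₀.not_ge (ge_of_tendsto (hbdry b hb) hge)

section TimeDependent

variable {m : ℕ} {β : ℝ}

lemma continuousOn_nbrAvg {w : List (Fin m) → ℝ → ℝ} {s : Set ℝ}
    (hw : ∀ y, ContinuousOn (w y) s) (x : List (Fin m)) :
    ContinuousOn (fun t => nbrAvg m β (fun y => w y t) x) s := by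
  unfold nbrAvg
  have := continuousOn_finsetSum Finset.univ fun i (_ : i ∈ Finset.univ) => hw (i :: x)
  fun_prop

lemma intervalIntegral_nbrAvg {w : List (Fin m) → ℝ → ℝ} {a b : ℝ}
    (hw : ∀ y, IntervalIntegrable (w y) volume a b) (x : List (Fin m)) :
    ∫ t in a..b, nbrAvg m β (fun y => w y t) x = nbrAvg m β (fun y => ∫ t in a..b, w y t) x := by
  have hsum : IntervalIntegrable (fun t => ∑ i : Fin m, w (i :: x) t) volume a b := by
    rw [← Finset.sum_fn]
    exact IntervalIntegrable.sum Finset.univ fun i _ => hw (i :: x)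
  simp only [nbrAvg, mul_div_assoc]
  rw [intervalIntegral.integral_add ((hw _).const_mul _) ((hsum.div_const _).const_mul _),
    intervalIntegral.integral_const_mul, intervalIntegral.integral_const_mul,
    intervalIntegral.integral_div, intervalIntegral.integral_finsetSum fun i _ => hw (i :: x)]

end TimeDependent

lemma tendsto_intervalIntegral_of_bounded {F : ℕ → ℝ → ℝ} {a b M : ℝ} (hab : a ≤ b)
    (hF : ∀ n, ContinuousOn (F n) (Set.Icc a b)) (hFM : ∀ n, ∀ t ∈ Set.Icc a b, |F n t| ≤ M)
    (hlim : ∀ t ∈ Set.Icc a b, Tendsto (fun n => F n t) atTop (𝓝 0)) :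
    Tendsto (fun n => ∫ t in a..b, F n t) atTop (𝓝 0) := by
  have hsub : Set.uIoc a b ⊆ Set.Icc a b := by
    rw [Set.uIoc_of_le hab]; exact Set.Ioc_subset_Icc_self
  simpa using intervalIntegral.tendsto_integral_filter_of_dominated_convergence (fun _ => M)
    (Eventually.of_forall fun n => ((hF n).mono hsub).aestronglyMeasurable measurableSet_uIoc)
    (Eventually.of_forall fun n => ae_of_all _ fun t ht => hFM n t (hsub ht))
    intervalIntegrable_const (ae_of_all _ fun t ht => hlim t (hsub ht))

section Comparison

variable {m : ℕ} {β : ℝ} {w w' : List (Fin m) → ℝ → ℝ} {a b σ M : ℝ}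

lemma integral_posPart_add_mul_le_nbrAvg (hβ0 : 0 < β) (hβ1 : β < 1 / 2) (hab : a ≤ b)
    (hσ : 0 < σ) (hM : 0 < M) (hw : ∀ x, ∀ t ∈ Set.Icc a b, HasDerivAt (w x) (w' x t) t)
    (hw' : ∀ x, ∀ t ∈ Set.Icc a b, w' x t ≤ lapB m β (fun y => w y t) x - σ)
    (ha : ∀ x, w x a ≤ 0) (hwM : ∀ x, ∀ t ∈ Set.Icc a b, w x t ≤ M) (x : List (Fin m)) :
    let J := fun y => ∫ t in a..b, max (w y t) 0
    J x + σ / M * pB β ^ x.length * J x ≤ nbrAvg m β J x := by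
  intro J
  have hp := pB_pos hβ0 hβ1
  have hwc : ∀ y, ContinuousOn (w y) (Set.Icc a b) := fun y t ht =>
    (hw y t ht).continuousAt.continuousWithinAt
  have hwpos : ∀ y, IntervalIntegrable (fun t => max (w y t) 0) volume a b := fun y =>
    ((hwc y).sup continuousOn_const).intervalIntegrable_of_Icc hab
  set r := pB β ^ (-(x.length : ℤ))
  have hrp : pB β ^ x.length * r = 1 := by
    rw [← zpow_natCast, ← zpow_add₀ hp.ne', add_neg_cancel, zpow_zero]
  have hscalar := intervalIntegral_posPart_le (r := r) hab (zpow_pos hp _) hσ hM (hw x)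
    (continuousOn_nbrAvg (β := β) hwc x) (ha x) (hwM x) fun t ht =>
      (hw' x t ht).trans_eq (by rw [lapB_eq_nbrAvg, mul_comm])
  have havg : ∫ t in a..b, max (nbrAvg m β (fun y => w y t) x) 0 ≤ nbrAvg m β J x := by
    rw [← intervalIntegral_nbrAvg hwpos]
    refine intervalIntegral.integral_mono_on hab
      (((continuousOn_nbrAvg hwc x).sup continuousOn_const).intervalIntegrable_of_Icc hab)
      ((continuousOn_nbrAvg (fun y => (hwc y).sup continuousOn_const) x).intervalIntegrable_of_Icc
        hab) fun t _ => max_le (nbrAvg_mono hβ0.le (by linarith) (fun y => le_max_left _ _) x)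
        (nbrAvg_nonneg hβ0.le (by linarith) (fun y => le_max_right _ _) x)
  have := mul_le_mul_of_nonneg_left
    (hscalar.trans (mul_le_mul_of_nonneg_left havg (zpow_pos hp _).le)) (pow_pos hp x.length).le
  calc J x + σ / M * pB β ^ x.length * J x = pB β ^ x.length * ((r + σ / M) * J x) := by
        linear_combination (-(J x)) * hrp
    _ ≤ nbrAvg m β J x := by linear_combination this + nbrAvg m β J x * hrp

theorem nonpos_of_strictSubsolution (hm : 0 < m) (hβ0 : 0 < β) (hβ1 : β < 1 / 2) (hab : a ≤ b)
    (hσ : 0 < σ) (hM : 0 < M) (hw : ∀ x, ∀ t ∈ Set.Icc a b, HasDerivAt (w x) (w' x t) t)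
    (hw' : ∀ x, ∀ t ∈ Set.Icc a b, w' x t ≤ lapB m β (fun y => w y t) x - σ)
    (ha : ∀ x, w x a ≤ 0) (hwM : ∀ x, ∀ t ∈ Set.Icc a b, w x t ≤ M)
    (hbdry : ∀ t ∈ Set.Icc a b, ZeroOnBoundary m fun x => max (w x t) 0)
    (x : List (Fin m)) {t : ℝ} (ht : t ∈ Set.Icc a b) : w x t ≤ 0 := by
  have hwc : ∀ y, ContinuousOn (fun t => max (w y t) 0) (Set.Icc a b) := fun y =>
    ContinuousOn.sup (fun t ht => (hw y t ht).continuousAt.continuousWithinAt) continuousOn_const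
  have hwM' : ∀ y, ∀ t ∈ Set.Icc a b, |max (w y t) 0| ≤ M := fun y t ht => by
    rw [abs_of_nonneg (le_max_right _ _)]
    exact max_le (hwM y t ht) hM.le
  have hJ := nonpos_of_add_mul_le_nbrAvg (B := M * (b - a)) hm hβ0.le (by linarith)
    (div_pos hσ hM) (pB_pos hβ0 hβ1) (pB_lt_one hβ0 hβ1)
    (fun y => (le_abs_self _).trans <| by
      simpa [abs_of_nonneg (sub_nonneg.2 hab)] using
        intervalIntegral.norm_integral_le_of_norm_le_const (f := fun t => max (w y t) 0)
          fun t ht => hwM' y t (Set.uIoc_subset_uIcc.trans (Set.uIcc_of_le hab).subset ht))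
    (integral_posPart_add_mul_le_nbrAvg hβ0 hβ1 hab hσ hM hw hw' ha hwM)
    (fun c hc => tendsto_intervalIntegral_of_bounded hab (fun n => hwc (c n))
      (fun n => hwM' (c n)) fun t ht => hbdry t ht c hc) x
  by_contra! hpos
  obtain rfl | hab' := hab.eq_or_lt
  · exact hpos.not_ge (le_antisymm ht.1 ht.2 ▸ ha x)
  · exact hJ.not_gt <| intervalIntegral.integral_pos hab' (hwc x)
      (fun s _ => le_max_right _ _) ⟨t, ht, lt_max_iff.2 (.inl hpos)⟩

end Comparison

/-- Adding `ε t` to the barrier makes its difference with `s u` a strict subsolution. -/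
theorem mul_le_barrier {m : ℕ} (hm : 0 < m) {β : ℝ} (hβ0 : 0 < β) (hβ1 : β < 1 / 2)
    {u : List (Fin m) → ℝ → ℝ}
    (heq : ∀ x, ∀ t > (0 : ℝ), HasDerivAt (u x) (lapB m β (fun y => u y t) x) t)
    (hloc : ∀ T > (0 : ℝ), ∃ M, ∀ x, ∀ t ∈ Set.Icc (0 : ℝ) T, |u x t| ≤ M)
    (hbdry : ∀ t > (0 : ℝ), ZeroOnBoundary m fun x => u x t)
    {lam c K s : ℝ} {v : List (Fin m) → ℝ} (hc : 0 < c) (hvc : ∀ x, c < v x)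
    (hv : ∀ x, lapB m β v x + lam * v x ≤ 0) (hK : ∀ x, |u x 1| ≤ K * c) (hs : |s| ≤ 1)
    (x : List (Fin m)) {t : ℝ} (ht : 1 ≤ t) :
    s * u x t ≤ K * Real.exp (-lam * (t - 1)) * v x := by
  have hK0 : 0 ≤ K := nonneg_of_mul_nonneg_left ((abs_nonneg _).trans (hK [])) hc
  have hsu : ∀ r, s * r ≤ |r| := fun r =>
    (le_abs_self _).trans (by rw [abs_mul]; exact mul_le_of_le_one_left (abs_nonneg r) hs)
  suffices h : ∀ ε > 0, s * u x t ≤ K * Real.exp (-lam * (t - 1)) * v x + ε * t from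
    le_of_forall_pos_le_add fun δ hδ => by
      simpa [div_mul_cancel₀ δ (by linarith : t ≠ 0)] using h (δ / t) (by positivity)
  intro ε hε
  obtain ⟨M, hM⟩ := hloc t (by linarith)
  let E : ℝ → ℝ := fun τ => K * Real.exp (-lam * (τ - 1))
  have hE : ∀ τ, HasDerivAt E (E τ * -lam) τ := fun τ => by
    simpa [E, mul_assoc] using
      ((((hasDerivAt_id τ).sub_const 1).const_mul (-lam)).exp.const_mul K)
  have hE0 : ∀ τ, 0 ≤ E τ := fun τ => mul_nonneg hK0 (Real.exp_pos _).le
  have hbar0 : ∀ y, ∀ τ ∈ Set.Icc 1 t, 0 ≤ E τ * v y + ε * τ := fun y τ hτ =>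
    add_nonneg (mul_nonneg (hE0 τ) (hc.trans (hvc y)).le) (mul_nonneg hε.le (by linarith [hτ.1]))
  have hcmp := nonpos_of_strictSubsolution (a := 1) (b := t) (M := |M| + 1)
    (w := fun y τ => s * u y τ - (E τ * v y + ε * τ))
    (w' := fun y τ => s * lapB m β (fun z => u z τ) y - (E τ * -lam * v y + ε))
    hm hβ0 hβ1 ht hε (by positivity)
    (fun y τ hτ => by
      simpa using ((heq y τ (by linarith [hτ.1])).const_mul s).fun_sub
        (((hE τ).mul_const (v y)).fun_add ((hasDerivAt_id τ).const_mul ε)))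
    (fun y τ _ => by
      -- `Δ_β (E τ • v) = E τ • Δ_β v ≤ -λ E τ • v = ∂_τ (E τ • v)`
      have hlin := lapB_linear (β := β) (Nat.pos_iff_ne_zero.1 hm) s (-E τ) (-(ε * τ))
        (fun z => u z τ) v y
      have hv' := mul_le_mul_of_nonneg_left (hv y) (hE0 τ)
      simp only [neg_mul, ← sub_eq_add_neg] at hlin
      simp only [sub_add_eq_sub_sub, hlin]
      nlinarith)
    (fun y => by
      have := mul_le_mul_of_nonneg_left (hvc y).le hK0
      have := (hsu _).trans (hK y)
      simp only [E, sub_self, mul_zero, Real.exp_zero, mul_one]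
      linarith)
    (fun y τ hτ => by
      have := (hsu _).trans (hM y τ ⟨by linarith [hτ.1], hτ.2⟩)
      have := hbar0 y τ hτ
      have := le_abs_self M
      linarith)
    (fun τ hτ b hb => squeeze_zero (g := fun n => |u (b n) τ|) (fun _ => le_max_right _ _)
      (fun n => max_le (by linarith [hsu (u (b n) τ), hbar0 (b n) τ hτ]) (abs_nonneg _))
      (by simpa using (hbdry τ (by linarith [hτ.1]) b hb).abs))
    x ⟨ht, le_rfl⟩
  simp only [E] at hcmp
  linarith

theorem abs_le_barrier {m : ℕ} (hm : 0 < m) {β : ℝ} (hβ0 : 0 < β) (hβ1 : β < 1 / 2)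
    {u : List (Fin m) → ℝ → ℝ}
    (heq : ∀ x, ∀ t > (0 : ℝ), HasDerivAt (u x) (lapB m β (fun y => u y t) x) t)
    (hloc : ∀ T > (0 : ℝ), ∃ M, ∀ x, ∀ t ∈ Set.Icc (0 : ℝ) T, |u x t| ≤ M)
    (hbdry : ∀ t > (0 : ℝ), ZeroOnBoundary m fun x => u x t)
    {lam c K : ℝ} {v : List (Fin m) → ℝ} (hc : 0 < c) (hvc : ∀ x, c < v x)
    (hv : ∀ x, lapB m β v x + lam * v x ≤ 0) (hK : ∀ x, |u x 1| ≤ K * c)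
    (x : List (Fin m)) {t : ℝ} (ht : 1 ≤ t) :
    |u x t| ≤ K * Real.exp (-lam * (t - 1)) * v x := by
  have h₁ := mul_le_barrier hm hβ0 hβ1 heq hloc hbdry hc hvc hv hK (s := 1) (by simp) x ht
  have h₂ := mul_le_barrier hm hβ0 hβ1 heq hloc hbdry hc hvc hv hK (s := -1) (by simp) x ht
  rw [abs_le]
  constructor <;> linarith

theorem stmt17_general (m : ℕ) (hm : 2 ≤ m) (β : ℝ) (hβ0 : 0 < β) (hβ1 : β < 1 / 2)
    (u : List (Fin m) → ℝ → ℝ)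
    (heq : ∀ x : List (Fin m), ∀ t > (0 : ℝ),
      HasDerivAt (u x) (lapB m β (fun y => u y t) x) t)
    (hloc : ∀ T > (0 : ℝ), ∃ M, ∀ x, ∀ t ∈ Set.Icc (0 : ℝ) T, |u x t| ≤ M)
    (hbdry : ∀ t > (0 : ℝ), ZeroOnBoundary m (fun x => u x t)) :
    ∀ lam : ℝ, memA m β lam →
      ∃ C > (0 : ℝ), ∀ x : List (Fin m), ∀ t > (0 : ℝ),
        |u x t| ≤ C * Real.exp (-lam * t) := by
  rintro lam ⟨hlam, v, c, Cv, hc, hv, hlapv⟩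
  obtain ⟨M, hM⟩ := hloc 1 one_pos
  have hM0 : 0 ≤ M := (abs_nonneg _).trans (hM [] 0 ⟨le_rfl, zero_le_one⟩)
  have hM1 : ∀ x, |u x 1| ≤ M / c * c := fun x => by
    rw [div_mul_cancel₀ _ hc.ne']; exact hM x 1 ⟨zero_le_one, le_rfl⟩
  set C₀ := max M (M / c * Cv)
  have hdecay : ∀ x, ∀ t > 0, |u x t| ≤ C₀ * Real.exp (-lam * (t - 1)) := by
    intro x t ht
    rcases le_total t 1 with h | h
    · exact (hM x t ⟨ht.le, h⟩).trans <| (le_max_left _ _).trans <|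
        le_mul_of_one_le_right (hM0.trans (le_max_left _ _)) (Real.one_le_exp (by nlinarith))
    · refine (abs_le_barrier (by omega) hβ0 hβ1 heq hloc hbdry hc (fun x => (hv x).1) hlapv hM1
        x h).trans ?_
      rw [mul_right_comm]
      gcongr
      exact (mul_le_mul_of_nonneg_left (hv x).2.le (by positivity)).trans (le_max_right _ _)
  refine ⟨(C₀ + 1) * Real.exp lam, by positivity, fun x t ht => (hdecay x t ht).trans ?_⟩
  rw [mul_assoc, ← Real.exp_add, show lam + -lam * t = -lam * (t - 1) by ring]
  gcongr
  linarith

theorem stmt17 (m : ℕ) (hm : 2 ≤ m) (β : ℝ) (hβ0 : 0 < β) (hβ1 : β < 1 / 2)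
    (f : List (Fin m) → ℝ) (hf : ∃ M, ∀ x, |f x| ≤ M)
    (u : List (Fin m) → ℝ → ℝ)
    (hinit : ∀ x, u x 0 = f x)
    (heq : ∀ x : List (Fin m), ∀ t > (0 : ℝ),
      HasDerivAt (u x) (lapB m β (fun y => u y t) x) t)
    (hloc : ∀ T > (0 : ℝ), ∃ M, ∀ x, ∀ t ∈ Set.Icc (0 : ℝ) T, |u x t| ≤ M)
    (hbdry : ∀ t > (0 : ℝ), ZeroOnBoundary m (fun x => u x t)) :
    ∀ lam : ℝ, memA m β lam →
      ∃ C > (0 : ℝ), ∀ x : List (Fin m), ∀ t > (0 : ℝ),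
        |u x t| ≤ C * Real.exp (-lam * t) :=
  stmt17_general m hm β hβ0 hβ1 u heq hloc hbdry
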